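/- arXiv:1011.6186 — 2 statements merged into one kernel-verified Lean document; each statement's English description precedes it below -/
import Mathlib

section
/- If P is a Leibniz-derivation of order k ≥ 1 of a finite-dimensional Lie algebra L over an algebraically closed field of characteristic zero, and α₁,…,α_{k+1} are scalars, then the right-nested bracket of the generalized eigenspaces of P for α₁,…,α_{k+1} is contained in the generalized eigenspace of P for α₁ + … + α_{k+1}. -/
open Finset

/-- Right-nested bracket `[x₁,[x₂,…,[x_k,x_{k+1}]…]]` of a list of elements. -/
def nestedBracket {L : Type*} [LieRing L] : List L → L
  | [] => 0
  | [x] => x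
  | x :: xs => ⁅x, nestedBracket xs⁆

/-- A Leibniz-derivation of order `k` of a Lie algebra. -/
def IsLeibnizDerivation {F L : Type*} [CommRing F] [LieRing L] [LieAlgebra F L] (k : ℕ)
    (P : L →ₗ[F] L) : Prop :=
  ∀ x : Fin (k + 1) → L,
    P (nestedBracket (List.ofFn x)) =
      ∑ i : Fin (k + 1), nestedBracket (List.ofFn (Function.update x i (P (x i))))

open Function

section Aux

variable {F L : Type*} [CommRing F] [LieRing L] [LieAlgebra F L]

theorem nestedBracket_cons {x : L} {xs : List L} (h : xs ≠ []) :
    nestedBracket (x :: xs) = ⁅x, nestedBracket xs⁆ := by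
  cases xs with
  | nil => exact absurd rfl h
  | cons a as => cases as <;> rfl

theorem nb_succ {n : ℕ} (g : Fin (n + 2) → L) :
    nestedBracket (List.ofFn g) =
      ⁅g 0, nestedBracket (List.ofFn fun i : Fin (n + 1) => g i.succ)⁆ := by
  rw [List.ofFn_succ]
  exact nestedBracket_cons (fun h => by simpa using congrArg List.length h)

theorem nb_update_add : ∀ (n : ℕ) (y : Fin (n + 1) → L) (i : Fin (n + 1)) (a b : L),
    nestedBracket (List.ofFn (update y i (a + b))) =
      nestedBracket (List.ofFn (update y i a)) + nestedBracket (List.ofFn (update y i b)) := by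
  intro n
  induction n with
  | zero =>
    intro y i a b
    fin_cases i
    simp [List.ofFn_succ, nestedBracket]
  | succ n ih =>
    intro y i a b
    refine Fin.cases ?_ ?_ i
    · have e : ∀ c : L, (fun i : Fin (n + 1) => update y 0 c i.succ) = fun i => y i.succ := by
        intro c; funext j; exact update_of_ne (Fin.succ_ne_zero j) _ _
      rw [nb_succ, nb_succ, nb_succ, e, e, e, update_self, update_self, update_self, add_lie]
    · intro j
      have e : ∀ c : L, (fun i : Fin (n + 1) => update y j.succ c i.succ)
          = update (fun i : Fin (n + 1) => y i.succ) j c :=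
        fun c => update_comp_eq_of_injective' y (Fin.succ_injective _) j c
      rw [nb_succ, nb_succ, nb_succ, e, e, e, update_of_ne (Fin.succ_ne_zero j).symm,
        update_of_ne (Fin.succ_ne_zero j).symm, update_of_ne (Fin.succ_ne_zero j).symm,
        ih _ j a b, lie_add]

theorem nb_update_smul : ∀ (n : ℕ) (y : Fin (n + 1) → L) (i : Fin (n + 1)) (c : F) (a : L),
    nestedBracket (List.ofFn (update y i (c • a))) =
      c • nestedBracket (List.ofFn (update y i a)) := by
  intro n
  induction n with
  | zero =>
    intro y i c a
    fin_cases i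
    simp [List.ofFn_succ, nestedBracket]
  | succ n ih =>
    intro y i c a
    refine Fin.cases ?_ ?_ i
    · have e : ∀ d : L, (fun i : Fin (n + 1) => update y 0 d i.succ) = fun i => y i.succ := by
        intro d; funext j; exact update_of_ne (Fin.succ_ne_zero j) _ _
      rw [nb_succ, nb_succ, e, e, update_self, update_self, smul_lie]
    · intro j
      have e : ∀ d : L, (fun i : Fin (n + 1) => update y j.succ d i.succ)
          = update (fun i : Fin (n + 1) => y i.succ) j d :=
        fun d => update_comp_eq_of_injective' y (Fin.succ_injective _) j d
      rw [nb_succ, nb_succ, e, e, update_of_ne (Fin.succ_ne_zero j).symm,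
        update_of_ne (Fin.succ_ne_zero j).symm, ih _ j c a, lie_smul]

variable (F) in
/-- The right-nested bracket as a multilinear map. -/
def nbMultilinear (n : ℕ) : MultilinearMap F (fun _ : Fin (n + 1) => L) L where
  toFun y := nestedBracket (List.ofFn y)
  map_update_add' {dec} y i a b := by
    have h : dec = instDecidableEqFin _ := Subsingleton.elim _ _
    subst h; exact nb_update_add n y i a b
  map_update_smul' {dec} y i c a := by
    have h : dec = instDecidableEqFin _ := Subsingleton.elim _ _
    subst h; exact nb_update_smul n y i c a

@[simp] theorem nbMultilinear_apply (n : ℕ) (y : Fin (n + 1) → L) :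
    nbMultilinear F n y = nestedBracket (List.ofFn y) := rfl

end Aux

theorem genEigenspace_bracket
    {F L : Type*} [Field F] [CharZero F] [IsAlgClosed F] [LieRing L] [LieAlgebra F L]
    [FiniteDimensional F L]
    {k : ℕ} (hk : 1 ≤ k) (P : L →ₗ[F] L) (hP : IsLeibnizDerivation k P)
    (α : Fin (k + 1) → F) (x : Fin (k + 1) → L)
    (hx : ∀ i, x i ∈ Module.End.maxGenEigenspace (P : Module.End F L) (α i)) :
    nestedBracket (List.ofFn x) ∈
      Module.End.maxGenEigenspace (P : Module.End F L) (∑ i, α i) := by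
  set B := nbMultilinear (L := L) F k with hB
  set Q : Module.End F L := (P : Module.End F L) - (∑ i, α i) • 1 with hQ
  set Qi : Fin (k + 1) → Module.End F L := fun i => (P : Module.End F L) - α i • 1 with hQi
  -- the linearized Leibniz rule for shifted operators
  have step : ∀ y : Fin (k + 1) → L, Q (B y) = ∑ i, B (update y i (Qi i (y i))) := by
    intro y
    have h := hP y
    simp only [← nbMultilinear_apply (F := F) k, ← hB] at h
    have h1 : Q (B y) = (P : Module.End F L) (B y) - (∑ i, α i) • B y := by
      simp [hQ, LinearMap.sub_apply, LinearMap.smul_apply, Module.End.one_apply]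
    rw [h1, h]
    rw [eq_comm]
    calc ∑ i, B (update y i (Qi i (y i)))
        = ∑ i, (B (update y i (P (y i))) - α i • B y) := by
          refine Finset.sum_congr rfl fun i _ => ?_
          have : Qi i (y i) = P (y i) - α i • y i := by
            simp [hQi, LinearMap.sub_apply, LinearMap.smul_apply, Module.End.one_apply]
          rw [this, B.map_update_sub, B.map_update_smul, update_eq_self]
      _ = _ := by rw [Finset.sum_sub_distrib, ← Finset.sum_smul]
  -- the iterated rule, via spans
  set S : ℕ → Set L := fun N =>
    {v | ∃ m : Fin (k + 1) → ℕ, ∑ i, m i = N ∧ v = B fun i => ((Qi i) ^ (m i)) (x i)} with hS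
  have key : ∀ N, (Q ^ N) (B x) ∈ Submodule.span F (S N) := by
    intro N
    induction N with
    | zero =>
      rw [pow_zero, Module.End.one_apply]
      exact Submodule.subset_span ⟨fun _ => 0, by simp, by simp⟩
    | succ N ih =>
      rw [pow_succ', Module.End.mul_apply]
      have hmap : Submodule.map Q (Submodule.span F (S N)) ≤ Submodule.span F (S (N + 1)) := by
        rw [Submodule.map_span, Submodule.span_le]
        rintro _ ⟨v, ⟨m, hm, rfl⟩, rfl⟩
        rw [step]
        refine Submodule.sum_mem _ fun j _ => Submodule.subset_span ?_
        refine ⟨update m j (m j + 1), ?_, ?_⟩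
        · rw [Finset.sum_update_of_mem (Finset.mem_univ j)]
          have := Finset.sum_eq_sum_sdiff_singleton_add (Finset.mem_univ j) m
          omega
        · congr 1
          funext i
          by_cases hij : i = j
          · subst hij
            rw [update_self, update_self, pow_succ', Module.End.mul_apply]
          · rw [update_of_ne hij, update_of_ne hij]
      exact hmap (Submodule.mem_map_of_mem ih)
  -- choose annihilating exponents
  choose n hn using fun i => (Module.End.mem_maxGenEigenspace _ _ _).mp (hx i)
  set N := ∑ i, (n i + 1) with hN
  have hz : ∀ v ∈ S N, v = 0 := by
    rintro v ⟨m, hm, rfl⟩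
    obtain ⟨j, hj⟩ : ∃ j, n j ≤ m j := by
      by_contra hcon
      push_neg at hcon
      have hlt : ∑ i, m i < ∑ i, (n i + 1) :=
        Finset.sum_lt_sum_of_nonempty Finset.univ_nonempty fun i _ => by
          have := hcon i; omega
      omega
    refine MultilinearMap.map_coord_zero _ j ?_
    show ((Qi j) ^ (m j)) (x j) = 0
    rw [show m j = (m j - n j) + n j by omega, pow_add, Module.End.mul_apply, hn j, map_zero]
  have h0 : Submodule.span F (S N) = ⊥ :=
    le_bot_iff.mp (Submodule.span_le.mpr fun v hv => by
      simp [Submodule.mem_bot, hz v hv])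
  have hzero : (Q ^ N) (B x) = 0 := by
    have := key N
    rw [h0, Submodule.mem_bot] at this
    exact this
  rw [Module.End.mem_maxGenEigenspace]
  exact ⟨N, hzero⟩
end

section
/- Every perfect ideal of a Lie algebra L (an ideal I with [I,I] = I) is invariant under every Leibniz-derivation of L. -/
open Finset

/-!
Iterating `I = ⁅I, I⁆` shows that a perfect ideal `I` is spanned by the right-nested brackets
of `k + 1` elements of `I`. A Leibniz-derivation `P` of order `k` sends such a bracket to a sum
of brackets in which only one entry has been replaced by its image under `P`; since `k + 1 ≥ 2`,
every summand still has an entry in `I`, hence lies in `I`.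
-/

section NestedBracket

variable {L : Type*} [LieRing L]

lemma nestedBracket_cons_of_ne_nil (x : L) {l : List L} (hl : l ≠ []) :
    nestedBracket (x :: l) = ⁅x, nestedBracket l⁆ := by
  cases l with
  | nil => exact absurd rfl hl
  | cons y ys => rfl

lemma nestedBracket_ofFn_cons {n : ℕ} (a : L) (y : Fin (n + 1) → L) :
    nestedBracket (List.ofFn (Fin.cons a y : Fin (n + 2) → L)) =
      ⁅a, nestedBracket (List.ofFn y)⁆ := by
  rw [List.ofFn_succ, nestedBracket_cons_of_ne_nil _ (by simp)]
  simp

end NestedBracket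

section LieIdeal

variable {R L : Type*} [CommRing R] [LieRing L] [LieAlgebra R L]

lemma nestedBracket_mem_of_mem (I : LieIdeal R L) {l : List L} {a : L} (ha : a ∈ l)
    (haI : a ∈ I) : nestedBracket l ∈ I := by
  induction l with
  | nil => simp at ha
  | cons x xs ih =>
    rcases eq_or_ne xs [] with rfl | hxs
    · simpa [nestedBracket, List.mem_singleton.mp ha] using haI
    rw [nestedBracket_cons_of_ne_nil x hxs]
    rcases List.mem_cons.mp ha with rfl | ha
    · exact lie_mem_left R L I a _ haI
    · exact I.lie_mem (ih ha)

def nestedBrackets (I : LieIdeal R L) (n : ℕ) : Set L :=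
  {z | ∃ y : Fin (n + 1) → L, (∀ i, y i ∈ I) ∧ nestedBracket (List.ofFn y) = z}

lemma lie_mem_span_nestedBrackets_succ (I : LieIdeal R L) {n : ℕ} {a b : L} (ha : a ∈ I)
    (hb : b ∈ Submodule.span R (nestedBrackets I n)) :
    ⁅a, b⁆ ∈ Submodule.span R (nestedBrackets I (n + 1)) := by
  have hmap : (Submodule.span R (nestedBrackets I n)).map (LieModule.toEnd R L L a) ≤
      Submodule.span R (nestedBrackets I (n + 1)) := by
    refine Submodule.map_span_le _ _ _ |>.mpr fun z ⟨y, hyI, hz⟩ => Submodule.subset_span ?_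
    refine ⟨Fin.cons a y, Fin.cases ha hyI, ?_⟩
    rw [nestedBracket_ofFn_cons, hz, LieModule.toEnd_apply_apply]
  exact hmap ⟨b, hb, rfl⟩

lemma mem_span_nestedBrackets_of_lie_self (I : LieIdeal R L) (hI : ⁅I, I⁆ = I) (n : ℕ) :
    ∀ x ∈ I, x ∈ Submodule.span R (nestedBrackets I n) := by
  induction n with
  | zero => exact fun x hx => Submodule.subset_span ⟨![x], fun i => by fin_cases i; exact hx, rfl⟩
  | succ n ih =>
    intro x hx
    rw [← hI, ← LieSubmodule.mem_toSubmodule, LieSubmodule.lieIdeal_oper_eq_linear_span'] at hx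
    refine Submodule.span_le.mpr ?_ hx
    rintro - ⟨a, ha, b, hb, rfl⟩
    exact lie_mem_span_nestedBrackets_succ I ha (ih b hb)

lemma IsLeibnizDerivation.map_mem_of_mem_nestedBrackets (I : LieIdeal R L) {k : ℕ}
    (hk : 1 ≤ k) {P : L →ₗ[R] L} (hP : IsLeibnizDerivation k P) {z : L}
    (hz : z ∈ nestedBrackets I k) : P z ∈ I := by
  obtain ⟨y, hyI, rfl⟩ := hz
  rw [hP y]
  refine sum_mem fun i _ => ?_
  have : Nontrivial (Fin (k + 1)) := Fin.nontrivial_iff_two_le.mpr (by omega)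
  obtain ⟨j, hji⟩ := exists_ne i
  refine nestedBracket_mem_of_mem I (List.mem_ofFn.mpr ⟨j, rfl⟩) ?_
  rw [Function.update_of_ne hji]
  exact hyI j

end LieIdeal

theorem perfect_ideal_invariant_under_leibnizDerivation_general
    {F L : Type*} [Field F] [LieRing L] [LieAlgebra F L]
    (I : LieIdeal F L) (hI : ⁅I, I⁆ = I)
    {k : ℕ} (hk : 1 ≤ k) (P : L →ₗ[F] L) (hP : IsLeibnizDerivation k P) :
    ∀ x ∈ I, P x ∈ I := by
  have hspan : Submodule.span F (nestedBrackets I k) ≤ (I : Submodule F L).comap P :=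
    Submodule.span_le.mpr fun _ hz => hP.map_mem_of_mem_nestedBrackets I hk hz
  exact fun x hx => hspan (mem_span_nestedBrackets_of_lie_self I hI k x hx)

theorem perfect_ideal_invariant_under_leibnizDerivation
    {F L : Type*} [Field F] [CharZero F] [LieRing L] [LieAlgebra F L]
    (I : LieIdeal F L) (hI : ⁅I, I⁆ = I)
    {k : ℕ} (hk : 1 ≤ k) (P : L →ₗ[F] L) (hP : IsLeibnizDerivation k P) :
    ∀ x ∈ I, P x ∈ I :=
  perfect_ideal_invariant_under_leibnizDerivation_general I hI hk P hP
end
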